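/- Let n ≥ 2 be a natural number and let α be a real number with 0 ≤ α ≤ 1. Let x, y be real numbers satisfying x − y > 0, x + (n² − 2)·y > 0, x ≤ n² − n, and (n² − 1)·(x + (n² − 2)·y) ≤ n² − n. Then (n²/(x − y) − α)^{n² − 2} · (1/(x + (n² − 2)·y) − α) ≥ ((n+1)/n − α)^{n² − 1}, with equality at x = n² − n, y = −(n² − n)/(n² − 1). -/

import Mathlib

/-! With `d = x - y`, `s = x + (n² - 2) y`, `M = (n + 1) / n` and `A = M - α`, the constraints read
`(n² - 2) d + s ≤ (n² - 1)(n² - n)` and `s ≤ 1 / M`, and both are equalities at the SIC point.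
Bernoulli's inequality linearises the power: `A ^ (k + 1) ≤ u ^ k * v` as soon as
`A² ≤ (A + k (u - A)) v`. For `u = n² / d - α` and `v = 1 / s - α` the right side increases with
`n² / d`, so the first constraint reduces it to a function of `s` alone; its excess over `A²` then
factors as `(1 - M s)` times a quantity bilinear in `(α, s)`, which is nonnegative for `α ≤ 1`. -/

lemma pow_succ_le_pow_mul_of_sq_le_mul {K : Type*} [Field K] [LinearOrder K]
    [IsStrictOrderedRing K] {A u v : K} (k : ℕ) (hA : 0 < A) (hu : -A ≤ u) (hv : 0 ≤ v)
    (h : A ^ 2 ≤ (A + k * (u - A)) * v) : A ^ (k + 1) ≤ u ^ k * v := by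
  have bernoulli := one_add_mul_sub_le_pow (a := u / A) (by rw [le_div_iff₀ hA]; linarith) k
  calc A ^ (k + 1) = A ^ k * (A ^ 2 / A) := by field_simp; ring
    _ ≤ A ^ k * ((A + k * (u - A)) * v / A) := by gcongr
    _ = A ^ k * (1 + k * (u / A - 1)) * v := by field_simp
    _ ≤ A ^ k * (u / A) ^ k * v := by gcongr
    _ = u ^ k * v := by rw [div_pow]; field_simp

namespace OptimalPOVM

variable {r α s : ℝ}

lemma lt_one_of_mul_le (hr : 2 ≤ r) (hs : (r ^ 2 - 1) * s ≤ r ^ 2 - r) : s < 1 := by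
  by_contra! h
  nlinarith [mul_le_mul_of_nonneg_left h (by nlinarith : (0 : ℝ) ≤ r ^ 2 - 1)]

lemma sub_pos_of_mul_le (hr : 2 ≤ r) (hs : (r ^ 2 - 1) * s ≤ r ^ 2 - r) :
    0 < (r ^ 2 - 1) * (r ^ 2 - r) - s := by
  have := lt_one_of_mul_le hr hs
  nlinarith [mul_le_mul (by nlinarith : (1 : ℝ) ≤ r ^ 2 - 1) (by nlinarith : (1 : ℝ) ≤ r ^ 2 - r)
    zero_le_one (by nlinarith)]

lemma one_div_sub_nonneg (hr : 2 ≤ r) (hα : α ≤ 1) (hs0 : 0 < s)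
    (hs : (r ^ 2 - 1) * s ≤ r ^ 2 - r) : 0 ≤ 1 / s - α := by
  have : 1 ≤ 1 / s := by rw [le_div_iff₀ hs0]; linarith [lt_one_of_mul_le hr hs]
  linarith

lemma tangent_gap_numerator_nonneg (hr : 2 ≤ r) (hα : α ≤ 1) (hs0 : 0 ≤ s)
    (hs : (r ^ 2 - 1) * s ≤ r ^ 2 - r) :
    0 ≤ (r + 1 - r * α) * ((r ^ 2 - 1) * (r ^ 2 - r) - s) - r * (r ^ 2 - 2) * (1 - α * s) := by
  have hC : r * (r ^ 2 - 2) ≤ (r ^ 2 - 1) * (r ^ 2 - r) := by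
    nlinarith [mul_nonneg (sub_nonneg.2 hr) (by nlinarith : (0 : ℝ) ≤ r ^ 2 - 1)]
  have hk : 1 ≤ r * (r ^ 2 - 2) := by nlinarith
  have hrC : r ^ 2 - r ≤ (r ^ 2 - 1) * (r ^ 2 - r) := by nlinarith
  nlinarith [mul_nonneg (sub_nonneg.2 hα) (sub_nonneg.2 (hs.trans hrC)),
    mul_nonneg hs0 (sub_nonneg.2 hk)]

lemma sq_le_tangent_of_boundary (hr : 2 ≤ r) (hα : α ≤ 1) (hs0 : 0 < s)
    (hs : (r ^ 2 - 1) * s ≤ r ^ 2 - r) :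
    ((r + 1) / r - α) ^ 2 ≤ ((r + 1) / r - α
      + (r ^ 2 - 2) * (r ^ 2 * (r ^ 2 - 2) / ((r ^ 2 - 1) * (r ^ 2 - r) - s) - (r + 1) / r))
      * (1 / s - α) := by
  have hr0 : 0 < r := by linarith
  have hgap : 0 ≤ r - (r + 1) * s := by nlinarith
  have hCs := sub_pos_of_mul_le hr hs
  have key : ((r + 1) / r - α
      + (r ^ 2 - 2) * (r ^ 2 * (r ^ 2 - 2) / ((r ^ 2 - 1) * (r ^ 2 - r) - s) - (r + 1) / r))
      * (1 / s - α) - ((r + 1) / r - α) ^ 2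
      = (r - (r + 1) * s) * ((r + 1 - r * α) * ((r ^ 2 - 1) * (r ^ 2 - r) - s)
          - r * (r ^ 2 - 2) * (1 - α * s)) / (r ^ 2 * s * ((r ^ 2 - 1) * (r ^ 2 - r) - s)) := by
    -- keep the denominator opaque: `field_simp` would expand it and lose track of `hCs`
    generalize hC : (r ^ 2 - 1) * (r ^ 2 - r) - s = C at hCs ⊢
    field_simp
    subst hC
    ring
  rw [← sub_nonneg, key]
  have := tangent_gap_numerator_nonneg hr hα hs0.le hs
  positivity

lemma sq_le_tangent (hr : 2 ≤ r) (hα : α ≤ 1) (hs0 : 0 < s) (hs : (r ^ 2 - 1) * s ≤ r ^ 2 - r)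
    {p : ℝ} (hp : r ^ 2 * (r ^ 2 - 2) ≤ p * ((r ^ 2 - 1) * (r ^ 2 - r) - s)) :
    ((r + 1) / r - α) ^ 2 ≤ ((r + 1) / r - α + (r ^ 2 - 2) * (p - (r + 1) / r)) * (1 / s - α) := by
  have hCs := sub_pos_of_mul_le hr hs
  have hv := one_div_sub_nonneg hr hα hs0 hs
  have hk : 0 ≤ r ^ 2 - 2 := by nlinarith
  calc ((r + 1) / r - α) ^ 2
      ≤ ((r + 1) / r - α
        + (r ^ 2 - 2) * (r ^ 2 * (r ^ 2 - 2) / ((r ^ 2 - 1) * (r ^ 2 - r) - s) - (r + 1) / r))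
        * (1 / s - α) := sq_le_tangent_of_boundary hr hα hs0 hs
    _ ≤ ((r + 1) / r - α + (r ^ 2 - 2) * (p - (r + 1) / r)) * (1 / s - α) := by
      gcongr
      rwa [div_le_iff₀ hCs]

lemma pow_le_of_constraints {k : ℕ} (hk : (k : ℝ) = r ^ 2 - 2) (hr : 2 ≤ r) (hα : α ≤ 1)
    {d : ℝ} (hd : 0 < d) (hs0 : 0 < s) (hds : (r ^ 2 - 2) * d + s ≤ (r ^ 2 - 1) * (r ^ 2 - r))
    (hs : (r ^ 2 - 1) * s ≤ r ^ 2 - r) :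
    ((r + 1) / r - α) ^ (k + 1) ≤ (r ^ 2 / d - α) ^ k * (1 / s - α) := by
  have hr0 : 0 < r := by linarith
  have hM : 1 < (r + 1) / r := by rw [lt_div_iff₀ hr0]; linarith
  have hp : 1 ≤ r ^ 2 / d := by rw [le_div_iff₀ hd]; nlinarith
  refine pow_succ_le_pow_mul_of_sq_le_mul k (by linarith) (by linarith)
    (one_div_sub_nonneg hr hα hs0 hs) ?_
  rw [hk, sub_sub_sub_cancel_right]
  exact sq_le_tangent hr hα hs0 hs (by rw [div_mul_eq_mul_div, le_div_iff₀ hd]; nlinarith)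

end OptimalPOVM

theorem optimal_povm_minimization
    (n : ℕ) (hn : 2 ≤ n) (α : ℝ) (hα1 : α ≤ 1)
    (x y : ℝ)
    (hxy : 0 < x - y)
    (hxy' : 0 < x + ((n : ℝ) ^ 2 - 2) * y)
    (hx : x ≤ (n : ℝ) ^ 2 - n)
    (hsum : ((n : ℝ) ^ 2 - 1) * (x + ((n : ℝ) ^ 2 - 2) * y) ≤ (n : ℝ) ^ 2 - n) :
    (((n : ℝ) + 1) / n - α) ^ (n ^ 2 - 1) ≤
      ((n : ℝ) ^ 2 / (x - y) - α) ^ (n ^ 2 - 2) *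
        (1 / (x + ((n : ℝ) ^ 2 - 2) * y) - α) ∧
    (x = (n : ℝ) ^ 2 - n ∧ y = -((n : ℝ) ^ 2 - n) / ((n : ℝ) ^ 2 - 1) →
      ((n : ℝ) ^ 2 / (x - y) - α) ^ (n ^ 2 - 2) *
        (1 / (x + ((n : ℝ) ^ 2 - 2) * y) - α) =
      (((n : ℝ) + 1) / n - α) ^ (n ^ 2 - 1)) := by
  have hr : (2 : ℝ) ≤ n := by exact_mod_cast hn
  have hn2 : 2 ≤ n ^ 2 := by nlinarith
  have hk : ((n ^ 2 - 2 : ℕ) : ℝ) = (n : ℝ) ^ 2 - 2 := by push_cast [Nat.cast_sub hn2]; ring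
  rw [show n ^ 2 - 1 = n ^ 2 - 2 + 1 by omega]
  refine ⟨OptimalPOVM.pow_le_of_constraints hk hr hα1 hxy hxy' ?_ hsum, ?_⟩
  · nlinarith
  · rintro ⟨rfl, rfl⟩
    have h21 : (n : ℝ) ^ 2 - 1 ≠ 0 := by nlinarith
    have hn0 : (n : ℝ) ≠ 0 := by positivity
    have hn1 : (n : ℝ) - 1 ≠ 0 := by linarith
    have hd : (n : ℝ) ^ 2 / (((n : ℝ) ^ 2 - n) - -((n : ℝ) ^ 2 - n) / ((n : ℝ) ^ 2 - 1))
        = (n + 1) / n := by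
      field_simp
      ring
    have hs : 1 / (((n : ℝ) ^ 2 - n) + ((n : ℝ) ^ 2 - 2) * (-((n : ℝ) ^ 2 - n) / ((n : ℝ) ^ 2 - 1)))
        = (n + 1) / n := by
      field_simp
      ring
    rw [hd, hs, ← pow_succ]
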